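/- arXiv:1705.05996 — 2 statements merged into one kernel-verified Lean document; each statement's English description precedes it below -/
import Mathlib

section
/- Let H : Matrix (Fin m) (Fin n) (ZMod 2) and let H' : Matrix (Fin m ⊕ Fin m) (Fin n ⊕ Fin n) (ZMod 2) satisfy both the row condition (H'(inl t)(inl k) + H'(inl t)(inr k) = H t k and H'(inr t)(inl k) + H'(inr t)(inr k) = H t k for all t, k) and the column condition (H'(inl t)(inl k) + H'(inr t)(inl k) = H t k and H'(inl t)(inr k) + H'(inr t)(inr k) = H t k for all t, k). Let d be the minimum Hamming weight of a nonzero vector in the kernel of H.mulVec. Then every nonzero vector z : (Fin n ⊕ Fin n) → ZMod 2 with H'.mulVec z = 0 has Hamming weight at least d; that is, d(C⁽²⁾) ≥ d(C). -/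
open Sum

/-- For a graph-cover parity-check matrix `H'` satisfying both the row and the
column conditions, every nonzero codeword of the cover code has Hamming weight
at least the minimum distance of the base code: `d(C⁽²⁾) ≥ d(C)`. -/
theorem graph_cover_minDist_ge {m n : ℕ}
    (H : Matrix (Fin m) (Fin n) (ZMod 2))
    (H' : Matrix (Fin m ⊕ Fin m) (Fin n ⊕ Fin n) (ZMod 2))
    (hrow : ∀ (t : Fin m) (k : Fin n),
      H' (inl t) (inl k) + H' (inl t) (inr k) = H t k ∧
      H' (inr t) (inl k) + H' (inr t) (inr k) = H t k)
    (hcol : ∀ (t : Fin m) (k : Fin n),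
      H' (inl t) (inl k) + H' (inr t) (inl k) = H t k ∧
      H' (inl t) (inr k) + H' (inr t) (inr k) = H t k)
    (d : ℕ)
    (hd : d = sInf {w | ∃ x : Fin n → ZMod 2,
        x ≠ 0 ∧ H.mulVec x = 0 ∧ hammingNorm x = w}) :
    ∀ z : (Fin n ⊕ Fin n) → ZMod 2, z ≠ 0 → H'.mulVec z = 0 →
      d ≤ hammingNorm z := by
  classical
  intro z hz hker
  set x : Fin n → ZMod 2 := fun k => z (inl k) + z (inr k) with hxdef
  have hkx : H.mulVec x = 0 := by
    funext t
    have h1 := congrFun hker (inl t)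
    have h2 := congrFun hker (inr t)
    simp only [Matrix.mulVec, dotProduct, Fintype.sum_sum_type,
      Pi.zero_apply] at h1 h2 ⊢
    have key : ∀ k : Fin n, H t k * x k =
        (H' (inl t) (inl k) * z (inl k) + H' (inl t) (inr k) * z (inr k)) +
        (H' (inr t) (inl k) * z (inl k) + H' (inr t) (inr k) * z (inr k)) := by
      intro k
      rw [show H t k * x k =
          (H' (inl t) (inl k) + H' (inr t) (inl k)) * z (inl k) +
          (H' (inl t) (inr k) + H' (inr t) (inr k)) * z (inr k) by
        rw [(hcol t k).1, (hcol t k).2, hxdef]; ring]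
      ring
    calc ∑ k, H t k * x k
        = (∑ k, H' (inl t) (inl k) * z (inl k) + ∑ k, H' (inl t) (inr k) * z (inr k))
          + (∑ k, H' (inr t) (inl k) * z (inl k) + ∑ k, H' (inr t) (inr k) * z (inr k)) := by
          simp only [key, Finset.sum_add_distrib]
      _ = 0 := by rw [h1, h2]; ring
  have hnorm : hammingNorm z = (Finset.univ.filter fun k : Fin n => z (inl k) ≠ 0).card + (Finset.univ.filter fun k : Fin n => z (inr k) ≠ 0).card := by
    unfold hammingNorm
    have hset : (Finset.univ.filter fun i : Fin n ⊕ Fin n => z i ≠ 0) =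
        ((Finset.univ.filter fun k : Fin n => z (inl k) ≠ 0).map ⟨inl, Sum.inl_injective⟩) ∪
        ((Finset.univ.filter fun k : Fin n => z (inr k) ≠ 0).map ⟨inr, Sum.inr_injective⟩) := by
      ext i
      cases i <;> simp
    rw [hset, Finset.card_union_of_disjoint (by simp [Finset.disjoint_left]),
      Finset.card_map, Finset.card_map]
  by_cases hx0 : x = 0
  · -- z (inl k) = z (inr k) for all k
    have heq : ∀ k, z (inr k) = z (inl k) := by
      intro k
      have h := congrFun hx0 k
      simp only [hxdef, Pi.zero_apply] at h
      revert h
      generalize z (inl k) = a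
      generalize z (inr k) = b
      revert a b
      decide
    set y : Fin n → ZMod 2 := fun k => z (inl k) with hydef
    have hy0 : y ≠ 0 := by
      intro h
      apply hz
      funext i
      cases i with
      | inl k => exact congrFun h k
      | inr k => rw [heq k]; exact congrFun h k
    have hky : H.mulVec y = 0 := by
      funext t
      have h1 := congrFun hker (inl t)
      simp only [Matrix.mulVec, dotProduct, Fintype.sum_sum_type,
        Pi.zero_apply] at h1 ⊢
      calc ∑ k, H t k * y k
          = ∑ k, (H' (inl t) (inl k) * z (inl k) + H' (inl t) (inr k) * z (inr k)) := by
            refine Finset.sum_congr rfl fun k _ => ?_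
            rw [← (hrow t k).1, heq k, hydef]; ring
        _ = 0 := by rw [Finset.sum_add_distrib, h1]
    have hle : d ≤ hammingNorm y := by
      rw [hd]
      exact Nat.sInf_le ⟨y, hy0, hky, rfl⟩
    refine hle.trans ?_
    rw [hnorm]
    exact Nat.le_add_right _ _
  · have hle : d ≤ hammingNorm x := by
      rw [hd]
      exact Nat.sInf_le ⟨x, hx0, hkx, rfl⟩
    refine hle.trans ?_
    rw [hnorm]
    unfold hammingNorm
    calc (Finset.univ.filter fun k : Fin n => x k ≠ 0).card
        ≤ ((Finset.univ.filter fun k : Fin n => z (inl k) ≠ 0) ∪ (Finset.univ.filter fun k : Fin n => z (inr k) ≠ 0)).card := by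
          apply Finset.card_le_card
          intro k hk
          simp only [Finset.mem_filter, Finset.mem_union, Finset.mem_univ, true_and] at hk ⊢
          by_contra h
          push_neg at h
          apply hk
          simp [hxdef, h.1, h.2]
      _ ≤ _ := Finset.card_union_le _ _
end

section
/- Let H : Matrix (Fin m) (Fin n) (ZMod 2) and let H' : Matrix (Fin m ⊕ Fin m) (Fin n ⊕ Fin n) (ZMod 2) satisfy both the row condition (H'(inl t)(inl k) + H'(inl t)(inr k) = H t k and H'(inr t)(inl k) + H'(inr t)(inr k) = H t k for all t, k) and the column condition (H'(inl t)(inl k) + H'(inr t)(inl k) = H t k and H'(inl t)(inr k) + H'(inr t)(inr k) = H t k for all t, k). Then the dimension over ZMod 2 of the kernel of the linear map z ↦ H'.mulVec z is at most twice the dimension of the kernel of x ↦ H.mulVec x; consequently the code rate of C⁽²⁾ (dimension divided by length 2n) is at most the code rate of C (dimension divided by length n). -/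
open Sum

/-- For a graph-cover parity-check matrix `H'` satisfying both the row and the
column conditions, the dimension of the cover code is at most twice that of
the base code, and hence the code rate of `C⁽²⁾` (dimension over length `2n`)
is at most the code rate of `C` (dimension over length `n`). -/
theorem graph_cover_dim_and_rate {m n : ℕ}
    (H : Matrix (Fin m) (Fin n) (ZMod 2))
    (H' : Matrix (Fin m ⊕ Fin m) (Fin n ⊕ Fin n) (ZMod 2))
    (hrow : ∀ (t : Fin m) (k : Fin n),
      H' (inl t) (inl k) + H' (inl t) (inr k) = H t k ∧
      H' (inr t) (inl k) + H' (inr t) (inr k) = H t k)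
    (hcol : ∀ (t : Fin m) (k : Fin n),
      H' (inl t) (inl k) + H' (inr t) (inl k) = H t k ∧
      H' (inl t) (inr k) + H' (inr t) (inr k) = H t k) :
    Module.finrank (ZMod 2) (LinearMap.ker H'.mulVecLin) ≤
      2 * Module.finrank (ZMod 2) (LinearMap.ker H.mulVecLin) ∧
    (Module.finrank (ZMod 2) (LinearMap.ker H'.mulVecLin) : ℚ) / (2 * n) ≤
      (Module.finrank (ZMod 2) (LinearMap.ker H.mulVecLin) : ℚ) / n := by
  classical
  have key : Module.finrank (ZMod 2) (LinearMap.ker H'.mulVecLin) ≤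
      2 * Module.finrank (ZMod 2) (LinearMap.ker H.mulVecLin) := by
    -- the "sum" map lands in ker H, by the column condition
    have mem1 : ∀ z : (Fin n ⊕ Fin n) → ZMod 2, H'.mulVec z = 0 →
        H.mulVec (fun k => z (inl k) + z (inr k)) = 0 := by
      intro z hz
      funext t
      have h1 : ∑ j : Fin n ⊕ Fin n, H' (inl t) j * z j = 0 := by
        have := congrFun hz (inl t)
        simpa [Matrix.mulVec, dotProduct] using this
      have h2 : ∑ j : Fin n ⊕ Fin n, H' (inr t) j * z j = 0 := by
        have := congrFun hz (inr t)
        simpa [Matrix.mulVec, dotProduct] using this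
      rw [Fintype.sum_sum_type] at h1 h2
      show ∑ k, H t k * (z (inl k) + z (inr k)) = 0
      calc ∑ k, H t k * (z (inl k) + z (inr k))
          = ∑ k, ((H' (inl t) (inl k) * z (inl k) + H' (inl t) (inr k) * z (inr k))
              + (H' (inr t) (inl k) * z (inl k) + H' (inr t) (inr k) * z (inr k))) := by
            refine Finset.sum_congr rfl fun k _ => ?_
            linear_combination (-(z (inl k))) * (hcol t k).1 + (-(z (inr k))) * (hcol t k).2
        _ = ((∑ k, H' (inl t) (inl k) * z (inl k)) + (∑ k, H' (inl t) (inr k) * z (inr k)))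
              + ((∑ k, H' (inr t) (inl k) * z (inl k)) + (∑ k, H' (inr t) (inr k) * z (inr k))) := by
            simp [Finset.sum_add_distrib]
        _ = 0 := by rw [h1, h2, add_zero]
    -- define the linear map g : ker H' → ker H
    let g : (LinearMap.ker H'.mulVecLin) →ₗ[ZMod 2] (LinearMap.ker H.mulVecLin) :=
      { toFun := fun z => ⟨fun k => z.1 (inl k) + z.1 (inr k), mem1 z.1 z.2⟩
        map_add' := by
          intro a b; apply Subtype.ext; funext k
          show (a.1 + b.1) (inl k) + (a.1 + b.1) (inr k) = _
          simp only [Pi.add_apply]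
          show _ = (a.1 (inl k) + a.1 (inr k)) + (b.1 (inl k) + b.1 (inr k))
          ring
        map_smul' := by
          intro c a; apply Subtype.ext; funext k
          show (c • a.1) (inl k) + (c • a.1) (inr k) = c • (a.1 (inl k) + a.1 (inr k))
          simp [mul_add] }
    have hrn := LinearMap.finrank_range_add_finrank_ker g
    have hrange : Module.finrank (ZMod 2) (LinearMap.range g) ≤
        Module.finrank (ZMod 2) (LinearMap.ker H.mulVecLin) :=
      Submodule.finrank_le _
    -- kernel bound: inject ker g into ker H via z ↦ z ∘ inl
    have hkermem : ∀ w : LinearMap.ker g,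
        H.mulVec (fun k => (w.1.1 : (Fin n ⊕ Fin n) → ZMod 2) (inl k)) = 0 := by
      intro w
      have hz : H'.mulVec w.1.1 = 0 := w.1.2
      have hsum : ∀ k, w.1.1 (inl k) + w.1.1 (inr k) = 0 := by
        intro k
        have h2 : g w.1 = 0 := w.2
        exact congrArg (fun v => (v : LinearMap.ker H.mulVecLin).1 k) h2
      have heq : ∀ k, w.1.1 (inr k) = w.1.1 (inl k) := by
        intro k
        have := eq_neg_of_add_eq_zero_right (hsum k)
        rw [this, CharTwo.neg_eq]
      funext t
      have h1 : ∑ j : Fin n ⊕ Fin n, H' (inl t) j * w.1.1 j = 0 := by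
        have := congrFun hz (inl t)
        simpa [Matrix.mulVec, dotProduct] using this
      rw [Fintype.sum_sum_type] at h1
      show ∑ k, H t k * w.1.1 (inl k) = 0
      calc ∑ k, H t k * w.1.1 (inl k)
          = ∑ k, (H' (inl t) (inl k) * w.1.1 (inl k) + H' (inl t) (inr k) * w.1.1 (inr k)) := by
            refine Finset.sum_congr rfl fun k _ => ?_
            rw [heq k]
            linear_combination (-(w.1.1 (inl k))) * (hrow t k).1
        _ = (∑ k, H' (inl t) (inl k) * w.1.1 (inl k))
              + (∑ k, H' (inl t) (inr k) * w.1.1 (inr k)) := by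
            simp [Finset.sum_add_distrib]
        _ = 0 := h1
    let h : (LinearMap.ker g) →ₗ[ZMod 2] (LinearMap.ker H.mulVecLin) :=
      { toFun := fun w => ⟨fun k => w.1.1 (inl k), hkermem w⟩
        map_add' := by
          intro a b; apply Subtype.ext; funext k; rfl
        map_smul' := by
          intro c a; apply Subtype.ext; funext k; rfl }
    have hinj : Function.Injective h := by
      intro a b hab
      have hab' : ∀ k, a.1.1 (inl k) = b.1.1 (inl k) := fun k =>
        congrArg (fun v => (v : LinearMap.ker H.mulVecLin).1 k) hab
      have hsuma : ∀ k, a.1.1 (inr k) = a.1.1 (inl k) := by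
        intro k
        have h2 : g a.1 = 0 := a.2
        have h4 : a.1.1 (inl k) + a.1.1 (inr k) = 0 :=
          congrArg (fun v => (v : LinearMap.ker H.mulVecLin).1 k) h2
        have := eq_neg_of_add_eq_zero_right h4
        rw [this, CharTwo.neg_eq]
      have hsumb : ∀ k, b.1.1 (inr k) = b.1.1 (inl k) := by
        intro k
        have h2 : g b.1 = 0 := b.2
        have h4 : b.1.1 (inl k) + b.1.1 (inr k) = 0 :=
          congrArg (fun v => (v : LinearMap.ker H.mulVecLin).1 k) h2
        have := eq_neg_of_add_eq_zero_right h4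
        rw [this, CharTwo.neg_eq]
      apply Subtype.ext; apply Subtype.ext
      funext j
      cases j with
      | inl k => exact hab' k
      | inr k => rw [hsuma k, hsumb k]; exact hab' k
    have hker : Module.finrank (ZMod 2) (LinearMap.ker g) ≤
        Module.finrank (ZMod 2) (LinearMap.ker H.mulVecLin) :=
      LinearMap.finrank_le_finrank_of_injective hinj
    omega
  refine ⟨key, ?_⟩
  rcases Nat.eq_zero_or_pos n with hn | hn
  · subst hn
    simp
  · have hn' : (0 : ℚ) < n := by exact_mod_cast hn
    rw [div_le_div_iff₀ (by positivity) hn']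
    have : (Module.finrank (ZMod 2) (LinearMap.ker H'.mulVecLin) : ℚ) ≤
        2 * (Module.finrank (ZMod 2) (LinearMap.ker H.mulVecLin) : ℚ) := by
      exact_mod_cast key
    nlinarith
end
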